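/- arXiv:2208.08564 — 6 statements merged into one kernel-verified Lean document; each statement's English description precedes it below -/
import Mathlib

section
/- Let g ≥ 2 be an integer, 1 ≤ k < g, ε > 0, p ∈ [0,1], and π ∈ [0,1]^g with Σ_{j=1}^g π_j = 1. Set D = C(g-1,k-1)·e^ε + C(g-1,k). Define θ ∈ ℝ^{2g} by θ[j] = (p/D)·(C(g-1,k-1)·e^ε·π_j + (C(g-2,k-2)·e^ε + C(g-2,k-1))·(1-π_j)) and θ[g+j] = ((1-p)/D)·(C(g-1,k-1)·e^ε·π_j + (C(g-2,k-2)·e^ε + C(g-2,k-1))·(1-π_j)) for j ∈ {1,…,g}. Define the 2g×2g matrix E by: E[j,j] = (p/D)·(C(g-1,k-1)·e^ε·π_j + (C(g-2,k-2)·e^ε + C(g-2,k-1))·(1-π_j)); E[g+j,g+j] = ((1-p)/D)·(C(g-1,k-1)·e^ε·π_j + (C(g-2,k-2)·e^ε + C(g-2,k-1))·(1-π_j)); for j ≠ ℓ in {1,…,g}, E[j,ℓ] = (p/D)·(C(g-2,k-2)·e^ε·(π_j+π_ℓ) + (C(g-3,k-3)·e^ε + C(g-3,k-2))·(1-π_j-π_ℓ))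 and E[g+j,g+ℓ] = ((1-p)/D)·(C(g-2,k-2)·e^ε·(π_j+π_ℓ) + (C(g-3,k-3)·e^ε + C(g-3,k-2))·(1-π_j-π_ℓ)); and E[j,g+ℓ] = E[g+j,ℓ] = 0 for all j,ℓ ∈ {1,…,g}. Then the matrix C = E − θθ^⊺ satisfies C·𝟙 = 0, where 𝟙 ∈ ℝ^{2g} is the all-ones vector. -/
/-- Binomial coefficient `C(a, b)` for integer arguments, with the convention that
`C(a, b) = 0` whenever `b < 0` or `b > a`. -/
noncomputable def binom (a b : ℤ) : ℝ :=
  if 0 ≤ b ∧ b ≤ a then ((a.toNat).choose b.toNat : ℝ) else 0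

lemma binom_succ_mul (a b : ℤ) :
    ((a:ℝ)+1) * binom a b = ((b:ℝ)+1) * binom (a+1) (b+1) := by
  unfold binom
  by_cases h : 0 ≤ b ∧ b ≤ a
  · have h1 : 0 ≤ b+1 ∧ b+1 ≤ a+1 := ⟨by omega, by omega⟩
    rw [if_pos h, if_pos h1]
    obtain ⟨hb, hba⟩ := h
    have ha : 0 ≤ a := le_trans hb hba
    obtain ⟨n, rfl⟩ : ∃ n : ℕ, a = (n:ℤ) := ⟨a.toNat, (Int.toNat_of_nonneg ha).symm⟩
    obtain ⟨m, rfl⟩ : ∃ m : ℕ, b = (m:ℤ) := ⟨b.toNat, (Int.toNat_of_nonneg hb).symm⟩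
    have e1 : ((n:ℤ)+1).toNat = n+1 := by omega
    have e2 : ((m:ℤ)+1).toNat = m+1 := by omega
    simp only [Int.toNat_natCast, e1, e2]
    have h3 : ((n+1) * n.choose m : ℕ) = (m+1) * (n+1).choose (m+1) := by
      simpa [Nat.succ_eq_add_one, mul_comm] using Nat.add_one_mul_choose_eq n m
    exact_mod_cast h3
  · rw [if_neg h]
    by_cases h2 : 0 ≤ b+1 ∧ b+1 ≤ a+1
    · have hb : b = -1 := by omega
      have hb' : (b:ℝ) + 1 = 0 := by rw [hb]; norm_num
      rw [if_pos h2, hb']; ring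
    · rw [if_neg h2]; ring

lemma binom_pos (a b : ℤ) (h : 0 ≤ b) (h2 : b ≤ a) : 0 < binom a b := by
  unfold binom
  rw [if_pos ⟨h, h2⟩]
  have : 0 < (a.toNat).choose b.toNat := Nat.choose_pos (by omega)
  exact_mod_cast this

lemma binom_nonneg (a b : ℤ) : 0 ≤ binom a b := by
  unfold binom
  split <;> positivity

/-- The covariance matrix `C = E − θθᵀ` of a privatized sample under the subset mechanism
annihilates the all-ones vector. -/
theorem stmt0 (g k : ℕ) (hg : 2 ≤ g) (hk1 : 1 ≤ k) (hkg : k < g)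
    (ε p : ℝ) (hε : 0 < ε) (hp : p ∈ Set.Icc (0:ℝ) 1)
    (pv : Fin g → ℝ) (hpv : ∀ j, pv j ∈ Set.Icc (0:ℝ) 1)
    (hpvsum : ∑ j, pv j = 1)
    (D : ℝ)
    (hD : D = binom ((g:ℤ)-1) ((k:ℤ)-1) * Real.exp ε + binom ((g:ℤ)-1) (k:ℤ))
    (θ : Fin g ⊕ Fin g → ℝ)
    (hθl : ∀ j : Fin g, θ (Sum.inl j) =
      (p / D) * (binom ((g:ℤ)-1) ((k:ℤ)-1) * Real.exp ε * pv j +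
        (binom ((g:ℤ)-2) ((k:ℤ)-2) * Real.exp ε + binom ((g:ℤ)-2) ((k:ℤ)-1)) * (1 - pv j)))
    (hθr : ∀ j : Fin g, θ (Sum.inr j) =
      ((1 - p) / D) * (binom ((g:ℤ)-1) ((k:ℤ)-1) * Real.exp ε * pv j +
        (binom ((g:ℤ)-2) ((k:ℤ)-2) * Real.exp ε + binom ((g:ℤ)-2) ((k:ℤ)-1)) * (1 - pv j)))
    (E : Matrix (Fin g ⊕ Fin g) (Fin g ⊕ Fin g) ℝ)
    (hEll_diag : ∀ j : Fin g, E (Sum.inl j) (Sum.inl j) =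
      (p / D) * (binom ((g:ℤ)-1) ((k:ℤ)-1) * Real.exp ε * pv j +
        (binom ((g:ℤ)-2) ((k:ℤ)-2) * Real.exp ε + binom ((g:ℤ)-2) ((k:ℤ)-1)) * (1 - pv j)))
    (hErr_diag : ∀ j : Fin g, E (Sum.inr j) (Sum.inr j) =
      ((1 - p) / D) * (binom ((g:ℤ)-1) ((k:ℤ)-1) * Real.exp ε * pv j +
        (binom ((g:ℤ)-2) ((k:ℤ)-2) * Real.exp ε + binom ((g:ℤ)-2) ((k:ℤ)-1)) * (1 - pv j)))
    (hEll_off : ∀ j ℓ : Fin g, j ≠ ℓ → E (Sum.inl j) (Sum.inl ℓ) =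
      (p / D) * (binom ((g:ℤ)-2) ((k:ℤ)-2) * Real.exp ε * (pv j + pv ℓ) +
        (binom ((g:ℤ)-3) ((k:ℤ)-3) * Real.exp ε + binom ((g:ℤ)-3) ((k:ℤ)-2)) * (1 - pv j - pv ℓ)))
    (hErr_off : ∀ j ℓ : Fin g, j ≠ ℓ → E (Sum.inr j) (Sum.inr ℓ) =
      ((1 - p) / D) * (binom ((g:ℤ)-2) ((k:ℤ)-2) * Real.exp ε * (pv j + pv ℓ) +
        (binom ((g:ℤ)-3) ((k:ℤ)-3) * Real.exp ε + binom ((g:ℤ)-3) ((k:ℤ)-2)) * (1 - pv j - pv ℓ)))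
    (hElr : ∀ j ℓ : Fin g, E (Sum.inl j) (Sum.inr ℓ) = 0)
    (hErl : ∀ j ℓ : Fin g, E (Sum.inr j) (Sum.inl ℓ) = 0) :
    (E - Matrix.vecMulVec θ θ).mulVec (fun _ => (1:ℝ)) = 0 := by
  set e := Real.exp ε with he
  set a1 := binom ((g:ℤ)-1) ((k:ℤ)-1) with ha1
  set a0 := binom ((g:ℤ)-1) ((k:ℤ)) with ha0
  set b1 := binom ((g:ℤ)-2) ((k:ℤ)-2) with hb1
  set b0 := binom ((g:ℤ)-2) ((k:ℤ)-1) with hb0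
  set c1 := binom ((g:ℤ)-3) ((k:ℤ)-3) with hc1
  set c0 := binom ((g:ℤ)-3) ((k:ℤ)-2) with hc0
  have hepos : 0 < e := Real.exp_pos ε
  have hDpos : 0 < D := by
    rw [hD]
    have h1 : 0 < a1 := binom_pos _ _ (by omega) (by omega)
    have h2 : 0 ≤ a0 := binom_nonneg _ _
    nlinarith
  have hDne : D ≠ 0 := ne_of_gt hDpos
  -- the four binomial identities
  have I1 : ((g:ℝ)-1) * b1 = ((k:ℝ)-1) * a1 := by
    have := binom_succ_mul ((g:ℤ)-2) ((k:ℤ)-2)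
    have e1 : (g:ℤ)-2+1 = (g:ℤ)-1 := by ring
    have e2 : (k:ℤ)-2+1 = (k:ℤ)-1 := by ring
    rw [e1, e2] at this
    push_cast at this ⊢
    linarith [this]
  have I2 : ((g:ℝ)-1) * b0 = (k:ℝ) * a0 := by
    have := binom_succ_mul ((g:ℤ)-2) ((k:ℤ)-1)
    have e1 : (g:ℤ)-2+1 = (g:ℤ)-1 := by ring
    have e2 : (k:ℤ)-1+1 = (k:ℤ) := by ring
    rw [e1, e2] at this
    push_cast at this ⊢
    linarith [this]
  have I3 : ((g:ℝ)-2) * c1 = ((k:ℝ)-2) * b1 := by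
    have := binom_succ_mul ((g:ℤ)-3) ((k:ℤ)-3)
    have e1 : (g:ℤ)-3+1 = (g:ℤ)-2 := by ring
    have e2 : (k:ℤ)-3+1 = (k:ℤ)-2 := by ring
    rw [e1, e2] at this
    push_cast at this ⊢
    linarith [this]
  have I4 : ((g:ℝ)-2) * c0 = ((k:ℝ)-1) * b0 := by
    have := binom_succ_mul ((g:ℤ)-3) ((k:ℤ)-2)
    have e1 : (g:ℤ)-3+1 = (g:ℤ)-2 := by ring
    have e2 : (k:ℤ)-2+1 = (k:ℤ)-1 := by ring
    rw [e1, e2] at this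
    push_cast at this ⊢
    linarith [this]
  -- sum of the group probabilities complement
  have hsumA : ∑ j : Fin g, (a1 * e * pv j + (b1 * e + b0) * (1 - pv j))
      = (k:ℝ) * D := by
    rw [Finset.sum_add_distrib, ← Finset.mul_sum, ← Finset.mul_sum, hpvsum]
    have : ∑ j : Fin g, (1 - pv j) = (g:ℝ) - 1 := by
      rw [Finset.sum_sub_distrib, Finset.sum_const, hpvsum, Finset.card_univ,
        Fintype.card_fin, nsmul_eq_mul, mul_one]
    rw [this]
    linear_combination e * I1 + I2 - (k:ℝ) * hD
  -- total sum of θ equals k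
  have hθsum : ∑ x : Fin g ⊕ Fin g, θ x = (k:ℝ) := by
    rw [Fintype.sum_sum_type]
    simp only [hθl, hθr]
    rw [← Finset.mul_sum, ← Finset.mul_sum, hsumA]
    field_simp
    ring
  -- row sums of E
  have key : ∀ (q : ℝ) (j : Fin g),
      (q / D) * (a1 * e * pv j + (b1 * e + b0) * (1 - pv j))
        + ∑ ℓ ∈ Finset.univ.erase j,
            (q / D) * (b1 * e * (pv j + pv ℓ) + (c1 * e + c0) * (1 - pv j - pv ℓ))
      = (k:ℝ) * ((q / D) * (a1 * e * pv j + (b1 * e + b0) * (1 - pv j))) := by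
    intro q j
    have hserase : ∑ ℓ ∈ Finset.univ.erase j, pv ℓ = 1 - pv j := by
      rw [Finset.sum_erase_eq_sub (Finset.mem_univ j), hpvsum]
    have hcard : ((Finset.univ.erase j).card : ℝ) = (g:ℝ) - 1 := by
      rw [Finset.card_erase_of_mem (Finset.mem_univ j), Finset.card_univ, Fintype.card_fin]
      have : 1 ≤ g := by omega
      push_cast [Nat.cast_sub this]
      ring
    have hsplit : ∑ ℓ ∈ Finset.univ.erase j,
        (q / D) * (b1 * e * (pv j + pv ℓ) + (c1 * e + c0) * (1 - pv j - pv ℓ))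
        = ((g:ℝ)-1) * ((q / D) * (b1 * e * pv j + (c1 * e + c0) * (1 - pv j)))
          + ((q / D) * (b1 * e - c1 * e - c0)) * (1 - pv j) := by
      have step : ∀ ℓ ∈ Finset.univ.erase j,
          (q / D) * (b1 * e * (pv j + pv ℓ) + (c1 * e + c0) * (1 - pv j - pv ℓ))
          = (q / D) * (b1 * e * pv j + (c1 * e + c0) * (1 - pv j))
            + ((q / D) * (b1 * e - c1 * e - c0)) * pv ℓ := by
        intro ℓ _; ring
      rw [Finset.sum_congr rfl step, Finset.sum_add_distrib, Finset.sum_const,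
        ← Finset.mul_sum, hserase, nsmul_eq_mul, hcard]
    rw [hsplit]
    have hq : q / D * e * pv j * (((g:ℝ)-1) * b1 - ((k:ℝ)-1) * a1) = 0 := by
      rw [show ((g:ℝ)-1) * b1 - ((k:ℝ)-1) * a1 = 0 by linarith [I1]]; ring
    linear_combination (q / D) * e * pv j * I1 + (q / D) * e * (1 - pv j) * I3
      + (q / D) * (1 - pv j) * I4
  have rowl : ∀ j : Fin g, ∑ c : Fin g ⊕ Fin g, E (Sum.inl j) c = (k:ℝ) * θ (Sum.inl j) := by
    intro j
    rw [Fintype.sum_sum_type]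
    simp only [hElr, Finset.sum_const_zero, add_zero]
    rw [← Finset.add_sum_erase _ _ (Finset.mem_univ j), hEll_diag j]
    have hoff : ∀ ℓ ∈ Finset.univ.erase j, E (Sum.inl j) (Sum.inl ℓ) =
        (p / D) * (b1 * e * (pv j + pv ℓ) + (c1 * e + c0) * (1 - pv j - pv ℓ)) := by
      intro ℓ hℓ
      exact hEll_off j ℓ (Ne.symm (Finset.ne_of_mem_erase hℓ))
    rw [Finset.sum_congr rfl hoff, key p j, hθl j]
  have rowr : ∀ j : Fin g, ∑ c : Fin g ⊕ Fin g, E (Sum.inr j) c = (k:ℝ) * θ (Sum.inr j) := by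
    intro j
    rw [Fintype.sum_sum_type]
    simp only [hErl, Finset.sum_const_zero]
    rw [zero_add, ← Finset.add_sum_erase _ _ (Finset.mem_univ j), hErr_diag j]
    have hoff : ∀ ℓ ∈ Finset.univ.erase j, E (Sum.inr j) (Sum.inr ℓ) =
        ((1 - p) / D) * (b1 * e * (pv j + pv ℓ) + (c1 * e + c0) * (1 - pv j - pv ℓ)) := by
      intro ℓ hℓ
      exact hErr_off j ℓ (Ne.symm (Finset.ne_of_mem_erase hℓ))
    rw [Finset.sum_congr rfl hoff, key (1-p) j, hθr j]
  funext i
  simp only [Matrix.mulVec, Matrix.sub_apply, Matrix.vecMulVec_apply, dotProduct,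
    mul_one, Pi.zero_apply]
  rw [Finset.sum_sub_distrib, ← Finset.mul_sum, hθsum]
  cases i with
  | inl j => rw [rowl j]; ring
  | inr j => rw [rowr j]; ring
end

section
/- Let g ≥ 2 be an integer, 1 ≤ k < g, ε > 0, p ∈ [0,1], and π ∈ [0,1]^g with Σ_{j=1}^g π_j = 1. Set D = C(g-1,k-1)·e^ε + C(g-1,k), and define θ ∈ ℝ^{2g} and the 2g×2g matrix E as follows: θ[j] = (p/D)·(C(g-1,k-1)·e^ε·π_j + (C(g-2,k-2)·e^ε + C(g-2,k-1))·(1-π_j)), θ[g+j] = ((1-p)/D)·(C(g-1,k-1)·e^ε·π_j + (C(g-2,k-2)·e^ε + C(g-2,k-1))·(1-π_j)); E[j,j] = θ[j], E[g+j,g+j] = θ[g+j]; for j ≠ ℓ, E[j,ℓ] = (p/D)·(C(g-2,k-2)·e^ε·(π_j+π_ℓ) + (C(g-3,k-3)·e^ε + C(g-3,k-2))·(1-π_j-π_ℓ)), E[g+j,g+ℓ] = ((1-p)/D)·(C(g-2,k-2)·e^ε·(π_j+π_ℓ) + (C(g-3,k-3)·e^ε + C(g-3,k-2))·(1-π_j-π_ℓ));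 and E[j,g+ℓ] = E[g+j,ℓ] = 0 for all j,ℓ. Then for every row index r ∈ {1,…,2g}, the row sum satisfies Σ_{s=1}^{2g} E[r,s] = k·θ[r]; that is, E·𝟙 = k·θ. -/
lemma binom_absorb (a b : ℤ) : (a:ℝ) * binom (a-1) (b-1) = (b:ℝ) * binom a b := by
  unfold binom
  by_cases hb1 : 1 ≤ b ∧ b ≤ a
  · obtain ⟨hb0, hba⟩ := hb1
    have h1 : (0 ≤ b-1 ∧ b-1 ≤ a-1) := ⟨by omega, by omega⟩
    have h2 : (0 ≤ b ∧ b ≤ a) := ⟨by omega, hba⟩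
    rw [if_pos h1, if_pos h2]
    obtain ⟨n, rfl⟩ : ∃ n : ℕ, a = (n:ℤ)+1 := ⟨(a-1).toNat, by omega⟩
    obtain ⟨m, rfl⟩ : ∃ m : ℕ, b = (m:ℤ)+1 := ⟨(b-1).toNat, by omega⟩
    have e1 : ((n:ℤ)+1-1).toNat = n := by omega
    have e2 : ((m:ℤ)+1-1).toNat = m := by omega
    have e3 : ((n:ℤ)+1).toNat = n+1 := by omega
    have e4 : ((m:ℤ)+1).toNat = m+1 := by omega
    rw [e1, e2, e3, e4]
    have h := Nat.add_one_mul_choose_eq n m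
    have h' : ((n+1) * n.choose m : ℝ) = ((n+1).choose (m+1) * (m+1) : ℝ) := by
      exact_mod_cast congrArg (Nat.cast : ℕ → ℝ) h
    push_cast at h' ⊢
    linarith
  · by_cases hb : 0 ≤ b ∧ b ≤ a
    · have : b = 0 := by omega
      subst this
      rw [if_neg (by omega)]
      norm_num
    · rw [if_neg hb]
      have : ¬ (0 ≤ b-1 ∧ b-1 ≤ a-1) := by omega
      rw [if_neg this]
      norm_num

lemma row_key (g k : ℕ) (hg : 2 ≤ g) (hk1 : 1 ≤ k) (hkg : k < g) (e c : ℝ)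
    (pv : Fin g → ℝ) (hpvsum : ∑ j, pv j = 1) (j : Fin g) (f : Fin g → ℝ)
    (hdiag : f j = c * (binom ((g:ℤ)-1) ((k:ℤ)-1) * e * pv j +
        (binom ((g:ℤ)-2) ((k:ℤ)-2) * e + binom ((g:ℤ)-2) ((k:ℤ)-1)) * (1 - pv j)))
    (hoff : ∀ ℓ, j ≠ ℓ → f ℓ = c * (binom ((g:ℤ)-2) ((k:ℤ)-2) * e * (pv j + pv ℓ) +
        (binom ((g:ℤ)-3) ((k:ℤ)-3) * e + binom ((g:ℤ)-3) ((k:ℤ)-2)) * (1 - pv j - pv ℓ))) :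
    ∑ ℓ, f ℓ = (k:ℝ) * (c * (binom ((g:ℤ)-1) ((k:ℤ)-1) * e * pv j +
        (binom ((g:ℤ)-2) ((k:ℤ)-2) * e + binom ((g:ℤ)-2) ((k:ℤ)-1)) * (1 - pv j))) := by
  set B11 := binom ((g:ℤ)-1) ((k:ℤ)-1) with hB11
  set B22 := binom ((g:ℤ)-2) ((k:ℤ)-2) with hB22
  set B21 := binom ((g:ℤ)-2) ((k:ℤ)-1) with hB21
  set B33 := binom ((g:ℤ)-3) ((k:ℤ)-3) with hB33
  set B32 := binom ((g:ℤ)-3) ((k:ℤ)-2) with hB32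
  have h1 : ((g:ℝ)-1) * B22 = ((k:ℝ)-1) * B11 := by
    have h := binom_absorb ((g:ℤ)-1) ((k:ℤ)-1)
    have e1 : (g:ℤ)-1-1 = (g:ℤ)-2 := by ring
    have e2 : (k:ℤ)-1-1 = (k:ℤ)-2 := by ring
    rw [e1, e2] at h
    push_cast at h
    rw [hB22, hB11]
    convert h using 2 <;> push_cast <;> ring
  have h2 : ((g:ℝ)-2) * B33 = ((k:ℝ)-2) * B22 := by
    have h := binom_absorb ((g:ℤ)-2) ((k:ℤ)-2)
    have e1 : (g:ℤ)-2-1 = (g:ℤ)-3 := by ring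
    have e2 : (k:ℤ)-2-1 = (k:ℤ)-3 := by ring
    rw [e1, e2] at h
    push_cast at h
    rw [hB33, hB22]
    convert h using 2 <;> push_cast <;> ring
  have h3 : ((g:ℝ)-2) * B32 = ((k:ℝ)-1) * B21 := by
    have h := binom_absorb ((g:ℤ)-2) ((k:ℤ)-1)
    have e1 : (g:ℤ)-2-1 = (g:ℤ)-3 := by ring
    have e2 : (k:ℤ)-1-1 = (k:ℤ)-2 := by ring
    rw [e1, e2] at h
    push_cast at h
    rw [hB32, hB21]
    convert h using 2 <;> push_cast <;> ring
  have hmem : j ∈ Finset.univ := Finset.mem_univ j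
  rw [← Finset.add_sum_erase _ f hmem]
  have hsum : ∑ ℓ ∈ Finset.univ.erase j, pv ℓ = 1 - pv j := by
    rw [Finset.sum_erase_eq_sub hmem, hpvsum]
  have hcard : ((Finset.univ.erase j).card : ℝ) = (g:ℝ) - 1 := by
    rw [Finset.card_erase_of_mem hmem]
    simp [Finset.card_univ]
    push_cast [Nat.cast_sub (by omega : 1 ≤ g)]
    ring
  set A := c * (B22 * e * pv j + (B33 * e + B32) * (1 - pv j)) with hA
  set B := c * (B22 * e - B33 * e - B32) with hB
  have hterm : ∀ ℓ ∈ Finset.univ.erase j, f ℓ = A + B * pv ℓ := by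
    intro ℓ hℓ
    rw [hoff ℓ (Finset.ne_of_mem_erase hℓ).symm, hA, hB]
    ring
  rw [Finset.sum_congr rfl hterm, Finset.sum_add_distrib, Finset.sum_const,
    ← Finset.mul_sum, hsum, nsmul_eq_mul, hcard, hdiag, hA, hB]
  linear_combination (c * e * pv j) * h1 + (c * e * (1 - pv j)) * h2 + (c * (1 - pv j)) * h3

/-- The second-moment matrix `E` of a privatized sample under the subset mechanism satisfies
`E · 𝟙 = k · θ`, i.e. every row sum equals `k` times the corresponding mean-vector entry. -/
theorem stmt1 (g k : ℕ) (hg : 2 ≤ g) (hk1 : 1 ≤ k) (hkg : k < g)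
    (ε p : ℝ) (hε : 0 < ε) (hp : p ∈ Set.Icc (0:ℝ) 1)
    (pv : Fin g → ℝ) (hpv : ∀ j, pv j ∈ Set.Icc (0:ℝ) 1)
    (hpvsum : ∑ j, pv j = 1)
    (D : ℝ)
    (hD : D = binom ((g:ℤ)-1) ((k:ℤ)-1) * Real.exp ε + binom ((g:ℤ)-1) (k:ℤ))
    (θ : Fin g ⊕ Fin g → ℝ)
    (hθl : ∀ j : Fin g, θ (Sum.inl j) =
      (p / D) * (binom ((g:ℤ)-1) ((k:ℤ)-1) * Real.exp ε * pv j +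
        (binom ((g:ℤ)-2) ((k:ℤ)-2) * Real.exp ε + binom ((g:ℤ)-2) ((k:ℤ)-1)) * (1 - pv j)))
    (hθr : ∀ j : Fin g, θ (Sum.inr j) =
      ((1 - p) / D) * (binom ((g:ℤ)-1) ((k:ℤ)-1) * Real.exp ε * pv j +
        (binom ((g:ℤ)-2) ((k:ℤ)-2) * Real.exp ε + binom ((g:ℤ)-2) ((k:ℤ)-1)) * (1 - pv j)))
    (E : Matrix (Fin g ⊕ Fin g) (Fin g ⊕ Fin g) ℝ)
    (hEll_diag : ∀ j : Fin g, E (Sum.inl j) (Sum.inl j) = θ (Sum.inl j))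
    (hErr_diag : ∀ j : Fin g, E (Sum.inr j) (Sum.inr j) = θ (Sum.inr j))
    (hEll_off : ∀ j ℓ : Fin g, j ≠ ℓ → E (Sum.inl j) (Sum.inl ℓ) =
      (p / D) * (binom ((g:ℤ)-2) ((k:ℤ)-2) * Real.exp ε * (pv j + pv ℓ) +
        (binom ((g:ℤ)-3) ((k:ℤ)-3) * Real.exp ε + binom ((g:ℤ)-3) ((k:ℤ)-2)) * (1 - pv j - pv ℓ)))
    (hErr_off : ∀ j ℓ : Fin g, j ≠ ℓ → E (Sum.inr j) (Sum.inr ℓ) =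
      ((1 - p) / D) * (binom ((g:ℤ)-2) ((k:ℤ)-2) * Real.exp ε * (pv j + pv ℓ) +
        (binom ((g:ℤ)-3) ((k:ℤ)-3) * Real.exp ε + binom ((g:ℤ)-3) ((k:ℤ)-2)) * (1 - pv j - pv ℓ)))
    (hElr : ∀ j ℓ : Fin g, E (Sum.inl j) (Sum.inr ℓ) = 0)
    (hErl : ∀ j ℓ : Fin g, E (Sum.inr j) (Sum.inl ℓ) = 0) :
    ∀ r : Fin g ⊕ Fin g, ∑ s : Fin g ⊕ Fin g, E r s = (k : ℝ) * θ r := by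
  intro r
  cases r with
  | inl j =>
    rw [Fintype.sum_sum_type]
    have hz : ∑ ℓ : Fin g, E (Sum.inl j) (Sum.inr ℓ) = 0 := by
      simp [hElr]
    rw [hz, add_zero, hθl j]
    exact row_key g k hg hk1 hkg (Real.exp ε) (p / D) pv hpvsum j
      (fun ℓ => E (Sum.inl j) (Sum.inl ℓ))
      (by simpa [hθl j] using hEll_diag j) (fun ℓ hℓ => hEll_off j ℓ hℓ)
  | inr j =>
    rw [Fintype.sum_sum_type]
    have hz : ∑ ℓ : Fin g, E (Sum.inr j) (Sum.inl ℓ) = 0 := by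
      simp [hErl]
    rw [hz, zero_add, hθr j]
    exact row_key g k hg hk1 hkg (Real.exp ε) ((1 - p) / D) pv hpvsum j
      (fun ℓ => E (Sum.inr j) (Sum.inr ℓ))
      (by simpa [hθr j] using hErr_diag j) (fun ℓ hℓ => hErr_off j ℓ hℓ)
end

section
/- Let g ≥ 2 be an integer, 1 ≤ k < g, ε > 0, p ∈ [0,1], and π ∈ [0,1]^g with Σ_{j=1}^g π_j = 1. Set D = C(g-1,k-1)·e^ε + C(g-1,k) and define θ ∈ ℝ^{2g} by θ[j] = (p/D)·(C(g-1,k-1)·e^ε·π_j + (C(g-2,k-2)·e^ε + C(g-2,k-1))·(1-π_j)) and θ[g+j] = ((1-p)/D)·(C(g-1,k-1)·e^ε·π_j + (C(g-2,k-2)·e^ε + C(g-2,k-1))·(1-π_j)) for j ∈ {1,…,g}. Then Σ_{j=1}^g θ[j] = p·k and Σ_{r=1}^{2g} θ[r] = k. -/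
/-- The mean vector `θ` of a privatized sample under the subset mechanism satisfies
`Σ_{j=1}^g θ[j] = p·k` and `Σ_{r=1}^{2g} θ[r] = k`. -/
theorem stmt2 (g k : ℕ) (hg : 2 ≤ g) (hk1 : 1 ≤ k) (hkg : k < g)
    (ε p : ℝ) (hε : 0 < ε) (hp : p ∈ Set.Icc (0:ℝ) 1)
    (pv : Fin g → ℝ) (hpv : ∀ j, pv j ∈ Set.Icc (0:ℝ) 1)
    (hpvsum : ∑ j, pv j = 1)
    (D : ℝ)
    (hD : D = binom ((g:ℤ)-1) ((k:ℤ)-1) * Real.exp ε + binom ((g:ℤ)-1) (k:ℤ))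
    (θ : Fin g ⊕ Fin g → ℝ)
    (hθl : ∀ j : Fin g, θ (Sum.inl j) =
      (p / D) * (binom ((g:ℤ)-1) ((k:ℤ)-1) * Real.exp ε * pv j +
        (binom ((g:ℤ)-2) ((k:ℤ)-2) * Real.exp ε + binom ((g:ℤ)-2) ((k:ℤ)-1)) * (1 - pv j)))
    (hθr : ∀ j : Fin g, θ (Sum.inr j) =
      ((1 - p) / D) * (binom ((g:ℤ)-1) ((k:ℤ)-1) * Real.exp ε * pv j +
        (binom ((g:ℤ)-2) ((k:ℤ)-2) * Real.exp ε + binom ((g:ℤ)-2) ((k:ℤ)-1)) * (1 - pv j))) :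
    (∑ j : Fin g, θ (Sum.inl j) = p * k) ∧
    (∑ r : Fin g ⊕ Fin g, θ r = k) := by
  have hEpos : 0 < Real.exp ε := Real.exp_pos ε
  set E := Real.exp ε with hE
  -- evaluate the binomials
  have t1 : ((g:ℤ)-1).toNat = g - 1 := by omega
  have t2 : ((k:ℤ)-1).toNat = k - 1 := by omega
  have t3 : ((g:ℤ)-2).toNat = g - 2 := by omega
  have t4 : ((k:ℤ):ℤ).toNat = k := by omega
  have hA : binom ((g:ℤ)-1) ((k:ℤ)-1) = ((g-1).choose (k-1) : ℝ) := by
    unfold binom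
    rw [if_pos (by omega), t1, t2]
  have hB : binom ((g:ℤ)-1) (k:ℤ) = ((g-1).choose k : ℝ) := by
    unfold binom
    rw [if_pos (by omega), t1]
    norm_num
  have hC1 : binom ((g:ℤ)-2) ((k:ℤ)-1) = ((g-2).choose (k-1) : ℝ) := by
    unfold binom
    rw [if_pos (by omega), t3, t2]
  set a : ℕ := (g-1).choose (k-1) with ha
  set b : ℕ := (g-1).choose k with hb
  set d : ℕ := (g-2).choose (k-1) with hd
  -- C2 : either 0 (k = 1) or the binomial
  have key2 : (g-1) * d = k * b := by
    have := Nat.add_one_mul_choose_eq (g-2) (k-1)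
    have h1 : g - 2 + 1 = g - 1 := by omega
    have h2 : k - 1 + 1 = k := by omega
    simp only [Nat.succ_eq_add_one, h1, h2] at this
    rw [this]; ring
  -- the value of binom (g-2) (k-2), cased
  have hkey : binom ((g:ℤ)-2) ((k:ℤ)-2) * E * ((g:ℝ)-1) = ((k:ℝ)-1) * a * E := by
    rcases eq_or_lt_of_le hk1 with hk | hk
    · have : binom ((g:ℤ)-2) ((k:ℤ)-2) = 0 := by
        unfold binom
        rw [if_neg (by omega)]
      have hkR : (k:ℝ) = 1 := by rw [← hk]; norm_num
      rw [this, hkR]; ring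
    · have t5 : ((k:ℤ)-2).toNat = k - 2 := by omega
      have hC2 : binom ((g:ℤ)-2) ((k:ℤ)-2) = ((g-2).choose (k-2) : ℝ) := by
        unfold binom
        rw [if_pos (by omega), t3, t5]
      have key1 : (g-1) * ((g-2).choose (k-2)) = (k-1) * a := by
        have := Nat.add_one_mul_choose_eq (g-2) (k-2)
        have h1 : g - 2 + 1 = g - 1 := by omega
        have h2 : k - 2 + 1 = k - 1 := by omega
        simp only [Nat.succ_eq_add_one, h1, h2] at this
        rw [ha, this]; ring
      rw [hC2]
      have := congrArg (fun n : ℕ => (n : ℝ)) key1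
      push_cast at this
      have hg1 : ((g:ℝ) - 1) = ((g-1 : ℕ) : ℝ) := by push_cast [Nat.cast_sub (by omega : 1 ≤ g)]; ring
      have hk1' : ((k:ℝ) - 1) = ((k-1 : ℕ) : ℝ) := by push_cast [Nat.cast_sub (by omega : 1 ≤ k)]; ring
      rw [hg1, hk1']
      push_cast
      nlinarith [this]
  -- cast key2 to ℝ
  have key2' : ((g:ℝ)-1) * d = (k:ℝ) * b := by
    have := congrArg (fun n : ℕ => (n : ℝ)) key2
    push_cast at this
    have hg1 : ((g:ℝ) - 1) = ((g-1 : ℕ) : ℝ) := by push_cast [Nat.cast_sub (by omega : 1 ≤ g)]; ring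
    rw [hg1]; push_cast; linarith [this]
  -- D positive
  have hapos : 0 < a := Nat.choose_pos (by omega)
  have hDpos : 0 < D := by
    rw [hD, hA, hB]
    have : (1:ℝ) ≤ (a:ℝ) := by exact_mod_cast hapos
    have : (0:ℝ) ≤ (b:ℝ) := Nat.cast_nonneg b
    nlinarith
  have hDne : D ≠ 0 := ne_of_gt hDpos
  -- the inner sum
  set Cc : ℝ := binom ((g:ℤ)-2) ((k:ℤ)-2) * E + binom ((g:ℤ)-2) ((k:ℤ)-1) with hCc
  have hsum : ∑ j : Fin g, (binom ((g:ℤ)-1) ((k:ℤ)-1) * E * pv j + Cc * (1 - pv j))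
      = (a:ℝ) * E + Cc * ((g:ℝ) - 1) := by
    have hone : ∑ _j : Fin g, (1:ℝ) = g := by simp
    rw [Finset.sum_add_distrib, ← Finset.mul_sum, hpvsum, ← Finset.mul_sum,
      Finset.sum_sub_distrib, hone, hpvsum, hA]
    ring
  have hS : (a:ℝ) * E + Cc * ((g:ℝ) - 1) = (k:ℝ) * D := by
    rw [hCc, hD, hA, hB, hC1]
    linear_combination hkey + key2'
  constructor
  · have : ∑ j : Fin g, θ (Sum.inl j) = (p / D) * ((a:ℝ) * E + Cc * ((g:ℝ) - 1)) := by
      rw [← hsum, Finset.mul_sum]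
      exact Finset.sum_congr rfl fun j _ => hθl j
    rw [this, hS]
    field_simp
  · rw [Fintype.sum_sum_type]
    have h1 : ∑ j : Fin g, θ (Sum.inl j) = (p / D) * ((k:ℝ) * D) := by
      rw [← hS, ← hsum, Finset.mul_sum]
      exact Finset.sum_congr rfl fun j _ => hθl j
    have h2 : ∑ j : Fin g, θ (Sum.inr j) = ((1-p) / D) * ((k:ℝ) * D) := by
      rw [← hS, ← hsum, Finset.mul_sum]
      exact Finset.sum_congr rfl fun j _ => hθr j
    rw [h1, h2]
    field_simp
    ring
end

section
/- Let g ≥ 1 be an integer, μ ∈ ℝ, let Σ ∈ ℝ^{g×g} be a matrix satisfying Σ·𝟙_g = 0 where 𝟙_g ∈ ℝ^g is the all-ones vector, and let Σ' ∈ ℝ^{g×g} be any matrix. Then the 2g×2g block matrix C = [[Σ, μΣ],[μΣ, Σ']] satisfies C·v = 0 for the vector v ∈ ℝ^{2g} whose first g coordinates are 1 and whose last g coordinates are 0. In particular, taking Σ to be the g×g matrix with Σ[j,j] = (1/D)·(C(g-1,k-1)·e^ε·π_j + (C(g-2,k-2)·e^ε + C(g-2,k-1))·(1-π_j)) − m_j²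 and Σ[j,ℓ] = (1/D)·(C(g-2,k-2)·e^ε·(π_j+π_ℓ) + (C(g-3,k-3)·e^ε + C(g-3,k-2))·(1-π_j-π_ℓ)) − m_j·m_ℓ for j ≠ ℓ, where D = C(g-1,k-1)·e^ε + C(g-1,k), m_j = (1/D)·(C(g-1,k-1)·e^ε·π_j + (C(g-2,k-2)·e^ε + C(g-2,k-1))·(1-π_j)), g ≥ 2, 1 ≤ k < g, ε > 0, and π ∈ [0,1]^g with Σ_{j=1}^g π_j = 1, the hypothesis Σ·𝟙_g = 0 holds, and hence this C has a nontrivial null space. -/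
set_option maxHeartbeats 1000000

lemma binom_succ (r s : ℤ) : (r:ℝ) * binom (r-1) (s-1) = (s:ℝ) * binom r s := by
  unfold binom
  by_cases h : 0 ≤ s - 1 ∧ s - 1 ≤ r - 1
  · have h0 : 0 ≤ s ∧ s ≤ r := ⟨by omega, by omega⟩
    rw [if_pos h, if_pos h0]
    obtain ⟨b, rfl⟩ : ∃ b:ℕ, s = (b:ℤ)+1 := ⟨(s-1).toNat, by omega⟩
    obtain ⟨a, rfl⟩ : ∃ a:ℕ, r = (a:ℤ)+1 := ⟨(r-1).toNat, by omega⟩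
    have e1 : ((a:ℤ)+1-1).toNat = a := by omega
    have e2 : ((b:ℤ)+1-1).toNat = b := by omega
    have e3 : ((a:ℤ)+1).toNat = a+1 := by omega
    have e4 : ((b:ℤ)+1).toNat = b+1 := by omega
    rw [e1, e2, e3, e4]
    have key : (a+1) * a.choose b = (b+1) * ((a+1).choose (b+1)) := by
      rw [mul_comm (b+1)]
      exact Nat.add_one_mul_choose_eq a b
    push_cast
    exact_mod_cast key
  · rw [if_neg h]
    by_cases h0 : 0 ≤ s ∧ s ≤ r
    · have hs : s = 0 := by omega
      subst hs; simp
    · rw [if_neg h0]; ring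

/-- (i) Any block matrix `[[Σ, μΣ],[μΣ, Σ']]` with `Σ·𝟙 = 0` annihilates the vector whose
first `g` coordinates are `1` and last `g` coordinates are `0`; (ii) the particular `Σ`
coming from the subset mechanism in the one-way ANOVA setting satisfies `Σ·𝟙 = 0`, so the
corresponding covariance matrix has a nontrivial null space. -/
theorem stmt3 :
    (∀ (g : ℕ), 1 ≤ g → ∀ (μ : ℝ) (S S' : Matrix (Fin g) (Fin g) ℝ),
      S.mulVec (fun _ => (1:ℝ)) = 0 →
      (Matrix.fromBlocks S (μ • S) (μ • S) S').mulVec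
        (Sum.elim (fun _ => (1:ℝ)) (fun _ => (0:ℝ))) = 0) ∧
    (∀ (g k : ℕ), 2 ≤ g → 1 ≤ k → k < g → ∀ ε : ℝ, 0 < ε →
      ∀ pv : Fin g → ℝ, (∀ j, pv j ∈ Set.Icc (0:ℝ) 1) → (∑ j, pv j = 1) →
      ∀ D : ℝ,
        D = binom ((g:ℤ)-1) ((k:ℤ)-1) * Real.exp ε + binom ((g:ℤ)-1) (k:ℤ) →
      ∀ m : Fin g → ℝ,
        (∀ j, m j = (1 / D) * (binom ((g:ℤ)-1) ((k:ℤ)-1) * Real.exp ε * pv j +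
          (binom ((g:ℤ)-2) ((k:ℤ)-2) * Real.exp ε + binom ((g:ℤ)-2) ((k:ℤ)-1)) * (1 - pv j))) →
      ∀ S : Matrix (Fin g) (Fin g) ℝ,
        (∀ j, S j j = (1 / D) * (binom ((g:ℤ)-1) ((k:ℤ)-1) * Real.exp ε * pv j +
          (binom ((g:ℤ)-2) ((k:ℤ)-2) * Real.exp ε + binom ((g:ℤ)-2) ((k:ℤ)-1)) * (1 - pv j))
          - m j ^ 2) →
        (∀ j ℓ, j ≠ ℓ → S j ℓ =
          (1 / D) * (binom ((g:ℤ)-2) ((k:ℤ)-2) * Real.exp ε * (pv j + pv ℓ) +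
            (binom ((g:ℤ)-3) ((k:ℤ)-3) * Real.exp ε + binom ((g:ℤ)-3) ((k:ℤ)-2))
              * (1 - pv j - pv ℓ)) - m j * m ℓ) →
        S.mulVec (fun _ => (1:ℝ)) = 0) := by
  constructor
  · intro g hg μ S S' hS
    have h0 : (fun _ : Fin g => (0:ℝ)) = 0 := rfl
    rw [Matrix.fromBlocks_mulVec, h0]
    simp [hS, Matrix.smul_mulVec]
  · intro g k hg hk hkg ε hε pv hpv hpvsum D hD m hm S hSd hSo
    set x := Real.exp ε with hx
    set b1 := binom ((g:ℤ)-1) ((k:ℤ)-1) with hb1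
    set b2 := binom ((g:ℤ)-1) (k:ℤ) with hb2
    set b3 := binom ((g:ℤ)-2) ((k:ℤ)-2) with hb3
    set b4 := binom ((g:ℤ)-2) ((k:ℤ)-1) with hb4
    set b5 := binom ((g:ℤ)-3) ((k:ℤ)-3) with hb5
    set b6 := binom ((g:ℤ)-3) ((k:ℤ)-2) with hb6
    -- binomial identities
    have I1 : ((g:ℝ)-1) * b3 = ((k:ℝ)-1) * b1 := by
      have := binom_succ ((g:ℤ)-1) ((k:ℤ)-1)
      rw [show (g:ℤ)-1-1 = (g:ℤ)-2 by ring, show (k:ℤ)-1-1 = (k:ℤ)-2 by ring] at this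
      rw [← hb3, ← hb1] at this
      push_cast at this
      exact this
    have I2 : ((g:ℝ)-1) * b4 = (k:ℝ) * b2 := by
      have := binom_succ ((g:ℤ)-1) (k:ℤ)
      rw [show (g:ℤ)-1-1 = (g:ℤ)-2 by ring] at this
      rw [← hb4, ← hb2] at this
      push_cast at this
      exact this
    have I3 : ((g:ℝ)-2) * b5 = ((k:ℝ)-2) * b3 := by
      have := binom_succ ((g:ℤ)-2) ((k:ℤ)-2)
      rw [show (g:ℤ)-2-1 = (g:ℤ)-3 by ring, show (k:ℤ)-2-1 = (k:ℤ)-3 by ring] at this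
      rw [← hb5, ← hb3] at this
      push_cast at this
      exact this
    have I4 : ((g:ℝ)-2) * b6 = ((k:ℝ)-1) * b4 := by
      have := binom_succ ((g:ℤ)-2) ((k:ℤ)-1)
      rw [show (g:ℤ)-2-1 = (g:ℤ)-3 by ring, show (k:ℤ)-1-1 = (k:ℤ)-2 by ring] at this
      rw [← hb6, ← hb4] at this
      push_cast at this
      exact this
    -- D positive
    have hb1pos : (1:ℝ) ≤ b1 := by
      rw [hb1]
      unfold binom
      rw [if_pos ⟨by omega, by omega⟩]
      have : 0 < (((g:ℤ)-1).toNat).choose (((k:ℤ)-1).toNat) :=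
        Nat.choose_pos (by omega)
      exact_mod_cast this
    have hxpos : 0 < x := Real.exp_pos ε
    have hDpos : 0 < D := by
      rw [hD]
      have := binom_nonneg ((g:ℤ)-1) (k:ℤ)
      nlinarith
    have hD0 : D ≠ 0 := ne_of_gt hDpos
    -- sum of m
    have key1 : b1*x + ((g:ℝ)-1)*(b3*x+b4) = (k:ℝ)*D := by
      rw [hD]; linear_combination x*I1 + I2
    have hSm : ∑ ℓ, m ℓ = (k:ℝ) := by
      have hform : ∀ ℓ : Fin g, m ℓ = ((1/D)*(b1*x - (b3*x+b4))) * pv ℓ + (1/D)*(b3*x+b4) := by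
        intro ℓ; rw [hm ℓ]; ring
      rw [Finset.sum_congr rfl (fun ℓ _ => hform ℓ), Finset.sum_add_distrib,
        ← Finset.mul_sum, hpvsum, Finset.sum_const, Finset.card_univ, Fintype.card_fin,
        nsmul_eq_mul]
      have : ((1:ℝ)/D) * ((k:ℝ)*D) = (k:ℝ) := by field_simp
      calc ((1:ℝ)/D)*(b1*x - (b3*x+b4)) * 1 + (g:ℝ) * ((1/D)*(b3*x+b4))
          = (1/D) * (b1*x + ((g:ℝ)-1)*(b3*x+b4)) := by ring
        _ = (1/D) * ((k:ℝ)*D) := by rw [key1]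
        _ = (k:ℝ) := this
    funext j
    show ∑ ℓ, S j ℓ * 1 = (0 : (Fin g → ℝ)) j
    simp only [mul_one, Pi.zero_apply]
    rw [← Finset.add_sum_erase _ _ (Finset.mem_univ j)]
    have herase_pv : ∑ ℓ ∈ Finset.univ.erase j, pv ℓ = 1 - pv j := by
      rw [Finset.sum_erase_eq_sub (Finset.mem_univ j), hpvsum]
    have herase_m : ∑ ℓ ∈ Finset.univ.erase j, m ℓ = (k:ℝ) - m j := by
      rw [Finset.sum_erase_eq_sub (Finset.mem_univ j), hSm]
    have hcard : (Finset.univ.erase j).card = g - 1 := by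
      rw [Finset.card_erase_of_mem (Finset.mem_univ j), Finset.card_univ, Fintype.card_fin]
    have hform : ∀ ℓ ∈ Finset.univ.erase j, S j ℓ =
        ((1/D)*(b3*x*pv j + (b5*x+b6)*(1-pv j))) + ((1/D)*(b3*x - (b5*x+b6))) * pv ℓ
          + (-(m j)) * m ℓ := by
      intro ℓ hℓ
      rw [hSo j ℓ (Finset.ne_of_mem_erase hℓ).symm]
      ring
    rw [Finset.sum_congr rfl hform, Finset.sum_add_distrib, Finset.sum_add_distrib,
      Finset.sum_const, ← Finset.mul_sum, ← Finset.mul_sum, herase_pv, herase_m, hcard,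
      hSd j, hm j, nsmul_eq_mul]
    have hgcast : ((g - 1 : ℕ) : ℝ) = (g:ℝ) - 1 := by
      have : 1 ≤ g := by omega
      push_cast [this]
      ring
    rw [hgcast]
    set P := pv j with hP
    linear_combination ((1/D)*x*P)*I1 + ((1/D)*x*(1-P))*I3 + ((1/D)*(1-P))*I4
end

section
/- Let g ≥ 1 be an integer and ε ≥ 0. Let M be the bit flipping mechanism, i.e., for input j ∈ {1,…,g} and output y ∈ {0,1}^g, Pr[M(j) = y] = Π_{ℓ=1}^g q_ℓ, where q_ℓ = e^{ε/2}/(e^{ε/2}+1) if y_ℓ equals the indicator 𝟙[ℓ = j], and q_ℓ = 1/(e^{ε/2}+1) otherwise. Then M is ε-locally differentially private: for all inputs j, j' ∈ {1,…,g} and every output y ∈ {0,1}^g, Pr[M(j) = y] ≤ e^ε · Pr[M(j') = y]. -/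
/-- The bit flipping mechanism (RAPPOR) is `ε`-locally differentially private. -/
theorem stmt5 (g : ℕ) (hg : 1 ≤ g) (ε : ℝ) (hε : 0 ≤ ε)
    (P : Fin g → (Fin g → Bool) → ℝ)
    (hP : ∀ (j : Fin g) (y : Fin g → Bool), P j y =
      ∏ ℓ : Fin g,
        (if y ℓ = decide (ℓ = j)
          then Real.exp (ε / 2) / (Real.exp (ε / 2) + 1)
          else 1 / (Real.exp (ε / 2) + 1))) :
    ∀ (j j' : Fin g) (y : Fin g → Bool), P j y ≤ Real.exp ε * P j' y := by
  intro j j' y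
  set E := Real.exp (ε / 2) with hE
  have hE1 : 1 ≤ E := Real.one_le_exp (by linarith)
  have hE0 : 0 ≤ E := by linarith
  have hEpos : 0 < E + 1 := by linarith
  have hEsq : E ^ 2 = Real.exp ε := by
    rw [hE, sq, ← Real.exp_add]; ring_nf
  rw [hP, hP]
  set a : Fin g → ℝ := fun ℓ =>
    if y ℓ = decide (ℓ = j) then E / (E + 1) else 1 / (E + 1) with ha
  set b : Fin g → ℝ := fun ℓ =>
    if y ℓ = decide (ℓ = j') then E / (E + 1) else 1 / (E + 1) with hb
  set c : Fin g → ℝ := fun ℓ =>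
    if ℓ ∈ ({j, j'} : Finset (Fin g)) then E else 1 with hc
  have hanneg : ∀ ℓ ∈ Finset.univ, (0:ℝ) ≤ a ℓ := by
    intro ℓ _; simp only [ha]; split <;> positivity
  have hbnneg : ∀ ℓ, 0 ≤ b ℓ := by
    intro ℓ; simp only [hb]; split <;> positivity
  have hlohi : 1 / (E + 1) ≤ E / (E + 1) := by gcongr
  have key : ∀ ℓ ∈ Finset.univ, a ℓ ≤ c ℓ * b ℓ := by
    intro ℓ _
    by_cases hd : decide (ℓ = j) = decide (ℓ = j')
    · have hab : a ℓ = b ℓ := by simp only [ha, hb, hd]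
      have hc1 : 1 ≤ c ℓ := by
        simp only [hc]; split
        · exact hE1
        · exact le_refl 1
      rw [hab]
      nlinarith [hbnneg ℓ]
    · have hmem : ℓ ∈ ({j, j'} : Finset (Fin g)) := by
        by_contra h
        simp only [Finset.mem_insert, Finset.mem_singleton, not_or] at h
        exact hd (by simp [h.1, h.2])
      have hcE : c ℓ = E := by simp only [hc, if_pos hmem]
      have haub : a ℓ ≤ E / (E + 1) := by
        simp only [ha]; split
        · exact le_refl _
        · exact hlohi
      have hblb : 1 / (E + 1) ≤ b ℓ := by
        simp only [hb]; split
        · exact hlohi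
        · exact le_refl _
      calc a ℓ ≤ E / (E + 1) := haub
        _ = E * (1 / (E + 1)) := by rw [mul_one_div]
        _ ≤ E * b ℓ := mul_le_mul_of_nonneg_left hblb hE0
        _ = c ℓ * b ℓ := by rw [hcE]
  calc ∏ ℓ : Fin g, a ℓ ≤ ∏ ℓ : Fin g, c ℓ * b ℓ :=
        Finset.prod_le_prod hanneg key
    _ = (∏ ℓ : Fin g, c ℓ) * ∏ ℓ : Fin g, b ℓ := Finset.prod_mul_distrib
    _ ≤ Real.exp ε * ∏ ℓ : Fin g, b ℓ := by
        apply mul_le_mul_of_nonneg_right _ (Finset.prod_nonneg fun ℓ _ => hbnneg ℓ)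
        have hcprod : ∏ ℓ : Fin g, c ℓ = E ^ (({j, j'} : Finset (Fin g)).card) := by
          rw [hc]
          rw [Finset.prod_ite_mem Finset.univ ({j, j'} : Finset (Fin g)) fun _ => E]
          simp [Finset.prod_const]
        rw [hcprod, ← hEsq]
        exact pow_le_pow_right₀ hE1 (le_trans (Finset.card_insert_le _ _) (by simp))
end

section
/- Let ε > 0, π ∈ [0,1], μ_1, μ_2 ∈ ℝ, and σ_1, σ_2 ≥ 0. On a probability space, let W be {0,1}-valued with Pr[W=1] = π, let Z_1, Z_2 be {0,1}-valued with Pr[Z_1=1] = Pr[Z_2=1] = e^ε/(e^ε+1), and let X_1, X_2 be square-integrable real-valued random variables with E[X_j] = μ_j and Var(X_j) = σ_j² for j ∈ {1,2}, such that W, Z_1, Z_2, X_1, X_2 are mutually independent. Define Y^ε[2] = Z_1·W·X_1 + (1−Z_2)·(1−W)·X_2 and Y^ε[3] = (1−Z_1)·W·X_1 + Z_2·(1−W)·X_2. Then Var(Y^ε[2]) = μ_1²·(1 − π·e^ε/(e^ε+1))·(π·e^ε/(e^ε+1)) + μ_2²·(1 − (1−π)/(e^ε+1))·((1−π)/(e^ε+1))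 − 2·(π·(1−π)·e^ε/(e^ε+1)²)·μ_1·μ_2 + (π·e^ε/(e^ε+1))·σ_1² + ((1−π)/(e^ε+1))·σ_2², and Var(Y^ε[3]) = μ_1²·(1 − π/(e^ε+1))·(π/(e^ε+1)) + μ_2²·(1 − (1−π)·e^ε/(e^ε+1))·((1−π)·e^ε/(e^ε+1)) − 2·(π·(1−π)·e^ε/(e^ε+1)²)·μ_1·μ_2 + (π/(e^ε+1))·σ_1² + ((1−π)·e^ε/(e^ε+1))·σ_2². -/
/-!
Write each coordinate as `B₁ X₁ + B₂ X₂`, where the selectors `B₁, B₂` are `{0,1}`-valued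
products of `W`, `Z_j` and their complements, never both equal to `1` (one carries the factor
`W`, the other `1 - W`), and `B_j` is independent of `X_j`. Then `B_j² = B_j` and `B₁ B₂ = 0` give
`(B₁ X₁ + B₂ X₂)² = B₁ X₁² + B₂ X₂²`, so by independence the first two moments of the coordinate
are `q₁ μ₁ + q₂ μ₂` and `q₁ (σ₁² + μ₁²) + q₂ (σ₂² + μ₂²)` with `q_j = E[B_j]`, a product of
`π` or `1 - π` with `e^ε/(e^ε+1)` or `1/(e^ε+1)`. The second coordinate is the first one with
`Z_j` replaced by `1 - Z_j`, which keeps the family independent and swaps those two factors.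
-/

open MeasureTheory ProbabilityTheory

section ZeroOne

lemma mul_eq_zero_or_one {a b : ℝ} (ha : a = 0 ∨ a = 1) (hb : b = 0 ∨ b = 1) :
    a * b = 0 ∨ a * b = 1 := by
  rcases ha with rfl | rfl <;> simp [hb]

lemma one_sub_eq_zero_or_one {a : ℝ} (ha : a = 0 ∨ a = 1) : 1 - a = 0 ∨ 1 - a = 1 := by
  rcases ha with rfl | rfl <;> simp

variable {Ω : Type*} [MeasurableSpace Ω] {P : Measure Ω} {f : Ω → ℝ}

lemma integrable_of_zero_or_one [IsFiniteMeasure P] (hf : Measurable f)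
    (h01 : ∀ ω, f ω = 0 ∨ f ω = 1) : Integrable f P :=
  .of_bound hf.aestronglyMeasurable 1 <| .of_forall fun ω => by rcases h01 ω with h | h <;> simp [h]

lemma integral_eq_of_zero_or_one {c : ℝ} (hf : Measurable f) (h01 : ∀ ω, f ω = 0 ∨ f ω = 1)
    (hc : 0 ≤ c) (hfc : P {ω | f ω = 1} = ENNReal.ofReal c) : ∫ ω, f ω ∂P = c := by
  have hf_eq (ω : Ω) : f ω = {ω | f ω = 1}.indicator 1 ω := by
    rcases h01 ω with h | h <;> simp [h]
  have hmeas : MeasurableSet {ω | f ω = 1} := hf (measurableSet_singleton 1)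
  rw [integral_congr_ae (.of_forall hf_eq), integral_indicator_one hmeas, measureReal_def, hfc,
    ENNReal.toReal_ofReal hc]

lemma integral_one_sub [IsProbabilityMeasure P] (hf : Integrable f P) :
    ∫ ω, 1 - f ω ∂P = 1 - ∫ ω, f ω ∂P := by
  simp [integral_sub (integrable_const 1) hf]

lemma MeasureTheory.MemLp.zero_or_one_mul {p : ENNReal} {B X : Ω → ℝ} (hX : MemLp X p P)
    (hB : Measurable B) (h01 : ∀ ω, B ω = 0 ∨ B ω = 1) : MemLp (fun ω => B ω * X ω) p P :=
  hX.of_le (hB.aestronglyMeasurable.mul hX.1) <| .of_forall fun ω => by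
    rcases h01 ω with h | h <;> simp [h]

end ZeroOne

/-- The paper's closed form for `Var[B₁ X₁ + B₂ X₂]`, in terms of `q_j = E[B_j]`, `m_j = E[X_j]`
and `v_j = Var[X_j]`. -/
def selectorVariance (q₁ q₂ m₁ m₂ v₁ v₂ : ℝ) : ℝ :=
  m₁ ^ 2 * (1 - q₁) * q₁ + m₂ ^ 2 * (1 - q₂) * q₂ - 2 * (q₁ * q₂) * m₁ * m₂ + q₁ * v₁ + q₂ * v₂

section Selectors

variable {Ω : Type*} [MeasurableSpace Ω] {P : Measure Ω} [IsProbabilityMeasure P]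

lemma integral_sq_eq_variance_add_sq {X : Ω → ℝ} (hX : MemLp X 2 P) :
    ∫ ω, X ω ^ 2 ∂P = Var[X; P] + (∫ ω, X ω ∂P) ^ 2 := by
  rw [variance_eq_sub hX]
  simp

theorem variance_mul_add_mul_of_zero_or_one {B₁ B₂ X₁ X₂ : Ω → ℝ}
    (hB₁ : Measurable B₁) (hB₂ : Measurable B₂)
    (hB₁01 : ∀ ω, B₁ ω = 0 ∨ B₁ ω = 1) (hB₂01 : ∀ ω, B₂ ω = 0 ∨ B₂ ω = 1)
    (hB₁₂ : ∀ ω, B₁ ω * B₂ ω = 0) (hX₁ : MemLp X₁ 2 P) (hX₂ : MemLp X₂ 2 P)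
    (hind₁ : IndepFun B₁ X₁ P) (hind₂ : IndepFun B₂ X₂ P) :
    Var[fun ω => B₁ ω * X₁ ω + B₂ ω * X₂ ω; P]
      = selectorVariance P[B₁] P[B₂] P[X₁] P[X₂] Var[X₁; P] Var[X₂; P] := by
  have hBX₁ := hX₁.zero_or_one_mul hB₁ hB₁01
  have hBX₂ := hX₂.zero_or_one_mul hB₂ hB₂01
  have hBXsq₁ := MemLp.zero_or_one_mul (memLp_one_iff_integrable.2 hX₁.integrable_sq) hB₁ hB₁01
  have hBXsq₂ := MemLp.zero_or_one_mul (memLp_one_iff_integrable.2 hX₂.integrable_sq) hB₂ hB₂01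
  have h_mean : ∫ ω, B₁ ω * X₁ ω + B₂ ω * X₂ ω ∂P = P[B₁] * P[X₁] + P[B₂] * P[X₂] := by
    rw [integral_add (hBX₁.integrable one_le_two) (hBX₂.integrable one_le_two),
      hind₁.integral_fun_mul_eq_mul_integral hB₁.aestronglyMeasurable hX₁.1,
      hind₂.integral_fun_mul_eq_mul_integral hB₂.aestronglyMeasurable hX₂.1]
  have h_sq_pointwise (ω : Ω) :
      (B₁ ω * X₁ ω + B₂ ω * X₂ ω) ^ 2 = B₁ ω * X₁ ω ^ 2 + B₂ ω * X₂ ω ^ 2 := by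
    have hidem (B : ℝ) (h : B = 0 ∨ B = 1) : B ^ 2 = B := by rcases h with rfl | rfl <;> simp
    linear_combination X₁ ω ^ 2 * hidem _ (hB₁01 ω) + 2 * X₁ ω * X₂ ω * hB₁₂ ω
      + X₂ ω ^ 2 * hidem _ (hB₂01 ω)
  have hind₁' : IndepFun B₁ (fun ω => X₁ ω ^ 2) P :=
    hind₁.comp measurable_id (measurable_id.pow_const 2)
  have hind₂' : IndepFun B₂ (fun ω => X₂ ω ^ 2) P :=
    hind₂.comp measurable_id (measurable_id.pow_const 2)
  have h_second : ∫ ω, (B₁ ω * X₁ ω + B₂ ω * X₂ ω) ^ 2 ∂P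
      = P[B₁] * ∫ ω, X₁ ω ^ 2 ∂P + P[B₂] * ∫ ω, X₂ ω ^ 2 ∂P := by
    simp_rw [h_sq_pointwise]
    rw [integral_add (memLp_one_iff_integrable.1 hBXsq₁) (memLp_one_iff_integrable.1 hBXsq₂),
      hind₁'.integral_fun_mul_eq_mul_integral hB₁.aestronglyMeasurable (hX₁.1.pow 2),
      hind₂'.integral_fun_mul_eq_mul_integral hB₂.aestronglyMeasurable (hX₂.1.pow 2)]
  have hY : MemLp (fun ω => B₁ ω * X₁ ω + B₂ ω * X₂ ω) 2 P := hBX₁.add hBX₂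
  rw [variance_eq_sub hY]
  simp only [Pi.pow_apply]
  rw [h_second, h_mean, integral_sq_eq_variance_add_sq hX₁, integral_sq_eq_variance_add_sq hX₂,
    selectorVariance]
  ring

theorem variance_randomizedResponse {W Z₁ Z₂ X₁ X₂ : Ω → ℝ}
    (hW01 : ∀ ω, W ω = 0 ∨ W ω = 1) (hZ₁01 : ∀ ω, Z₁ ω = 0 ∨ Z₁ ω = 1)
    (hZ₂01 : ∀ ω, Z₂ ω = 0 ∨ Z₂ ω = 1)
    (hW : Measurable W) (hZ₁ : Measurable Z₁) (hZ₂ : Measurable Z₂)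
    (hX₁ : MemLp X₁ 2 P) (hX₂ : MemLp X₂ 2 P) (hindep : iIndepFun ![W, Z₁, Z₂, X₁, X₂] P) :
    Var[fun ω => Z₁ ω * W ω * X₁ ω + (1 - Z₂ ω) * (1 - W ω) * X₂ ω; P]
      = selectorVariance (P[Z₁] * P[W]) ((1 - P[Z₂]) * (1 - P[W])) P[X₁] P[X₂]
          Var[X₁; P] Var[X₂; P] := by
  have hmeas : ∀ i, AEMeasurable (![W, Z₁, Z₂, X₁, X₂] i) P := by
    intro i
    fin_cases i
    exacts [hW.aemeasurable, hZ₁.aemeasurable, hZ₂.aemeasurable, hX₁.aemeasurable,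
      hX₂.aemeasurable]
  have hflip : Measurable fun x : ℝ => 1 - x := measurable_const.sub measurable_id
  have hZ₁W : IndepFun Z₁ W P := hindep.indepFun (i := 1) (j := 0) (by decide)
  have hZ₂W : IndepFun (fun ω => 1 - Z₂ ω) (fun ω => 1 - W ω) P :=
    (hindep.indepFun (i := 2) (j := 0) (by decide)).comp hflip hflip
  have hind₁ : IndepFun (fun ω => Z₁ ω * W ω) X₁ P :=
    (hindep.indepFun_prodMk₀ hmeas 1 0 3 (by decide) (by decide)).comp
      (measurable_fst.mul measurable_snd) measurable_id
  have hind₂ : IndepFun (fun ω => (1 - Z₂ ω) * (1 - W ω)) X₂ P :=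
    (hindep.indepFun_prodMk₀ hmeas 2 0 4 (by decide) (by decide)).comp
      ((hflip.comp measurable_fst).mul (hflip.comp measurable_snd)) measurable_id
  have hq₁ : P[fun ω => Z₁ ω * W ω] = P[Z₁] * P[W] :=
    hZ₁W.integral_fun_mul_eq_mul_integral hZ₁.aestronglyMeasurable hW.aestronglyMeasurable
  have hq₂ : P[fun ω => (1 - Z₂ ω) * (1 - W ω)] = (1 - P[Z₂]) * (1 - P[W]) := by
    rw [hZ₂W.integral_fun_mul_eq_mul_integral (hflip.comp hZ₂).aestronglyMeasurable
      (hflip.comp hW).aestronglyMeasurable, integral_one_sub (integrable_of_zero_or_one hZ₂ hZ₂01),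
      integral_one_sub (integrable_of_zero_or_one hW hW01)]
  rw [← hq₁, ← hq₂]
  refine variance_mul_add_mul_of_zero_or_one (hZ₁.mul hW) ((hflip.comp hZ₂).mul (hflip.comp hW))
    (fun ω => mul_eq_zero_or_one (hZ₁01 ω) (hW01 ω))
    (fun ω => mul_eq_zero_or_one (one_sub_eq_zero_or_one (hZ₂01 ω))
      (one_sub_eq_zero_or_one (hW01 ω)))
    (fun ω => ?_) hX₁ hX₂ hind₁ hind₂
  rcases hW01 ω with h | h <;> simp [h]

end Selectors

theorem stmt15_general (ε pgrp μ1 μ2 σ1 σ2 : ℝ) (hpgrp : pgrp ∈ Set.Icc (0:ℝ) 1)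
    (Ω : Type*) [MeasurableSpace Ω] (P : Measure Ω) [IsProbabilityMeasure P]
    (W Z1 Z2 X1 X2 : Ω → ℝ)
    (hW01 : ∀ ω, W ω = 0 ∨ W ω = 1)
    (hZ101 : ∀ ω, Z1 ω = 0 ∨ Z1 ω = 1)
    (hZ201 : ∀ ω, Z2 ω = 0 ∨ Z2 ω = 1)
    (hWm : Measurable W) (hZ1m : Measurable Z1) (hZ2m : Measurable Z2)
    (hW : P {ω | W ω = 1} = ENNReal.ofReal pgrp)
    (hZ1 : P {ω | Z1 ω = 1} = ENNReal.ofReal (Real.exp ε / (Real.exp ε + 1)))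
    (hZ2 : P {ω | Z2 ω = 1} = ENNReal.ofReal (Real.exp ε / (Real.exp ε + 1)))
    (hX1sq : MemLp X1 2 P) (hX2sq : MemLp X2 2 P)
    (hX1 : ∫ ω, X1 ω ∂P = μ1) (hX2 : ∫ ω, X2 ω ∂P = μ2)
    (hVar1 : variance X1 P = σ1 ^ 2) (hVar2 : variance X2 P = σ2 ^ 2)
    (hindep : iIndepFun ![W, Z1, Z2, X1, X2] P) :
    (variance (fun ω => Z1 ω * W ω * X1 ω + (1 - Z2 ω) * (1 - W ω) * X2 ω) P
      = μ1 ^ 2 * (1 - pgrp * Real.exp ε / (Real.exp ε + 1))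
            * (pgrp * Real.exp ε / (Real.exp ε + 1))
        + μ2 ^ 2 * (1 - (1 - pgrp) / (Real.exp ε + 1)) * ((1 - pgrp) / (Real.exp ε + 1))
        - 2 * (pgrp * (1 - pgrp) * Real.exp ε / (Real.exp ε + 1) ^ 2) * μ1 * μ2
        + (pgrp * Real.exp ε / (Real.exp ε + 1)) * σ1 ^ 2
        + ((1 - pgrp) / (Real.exp ε + 1)) * σ2 ^ 2) ∧
    (variance (fun ω => (1 - Z1 ω) * W ω * X1 ω + Z2 ω * (1 - W ω) * X2 ω) P
      = μ1 ^ 2 * (1 - pgrp / (Real.exp ε + 1)) * (pgrp / (Real.exp ε + 1))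
        + μ2 ^ 2 * (1 - (1 - pgrp) * Real.exp ε / (Real.exp ε + 1))
            * ((1 - pgrp) * Real.exp ε / (Real.exp ε + 1))
        - 2 * (pgrp * (1 - pgrp) * Real.exp ε / (Real.exp ε + 1) ^ 2) * μ1 * μ2
        + (pgrp / (Real.exp ε + 1)) * σ1 ^ 2
        + ((1 - pgrp) * Real.exp ε / (Real.exp ε + 1)) * σ2 ^ 2) := by
  have hIW := integral_eq_of_zero_or_one hWm hW01 hpgrp.1 hW
  have hIZ1 := integral_eq_of_zero_or_one hZ1m hZ101 (by positivity) hZ1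
  have hIZ2 := integral_eq_of_zero_or_one hZ2m hZ201 (by positivity) hZ2
  have hflip : Measurable fun x : ℝ => 1 - x := measurable_const.sub measurable_id
  have hindep' : iIndepFun ![W, fun ω => 1 - Z1 ω, fun ω => 1 - Z2 ω, X1, X2] P := by
    convert hindep.comp ![id, (1 - ·), (1 - ·), id, id] (by
      intro i; fin_cases i <;> first | exact measurable_id | exact hflip) using 1
    funext i
    fin_cases i <;> rfl
  have hVarY := variance_randomizedResponse hW01 hZ101 hZ201 hWm hZ1m hZ2m hX1sq hX2sq hindep
  have hVarY' := variance_randomizedResponse hW01 (fun ω => one_sub_eq_zero_or_one (hZ101 ω))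
    (fun ω => one_sub_eq_zero_or_one (hZ201 ω)) hWm (hflip.comp hZ1m) (hflip.comp hZ2m)
    hX1sq hX2sq hindep'
  simp only [sub_sub_cancel] at hVarY'
  rw [hVarY, hVarY', integral_one_sub (integrable_of_zero_or_one hZ1m hZ101),
    integral_one_sub (integrable_of_zero_or_one hZ2m hZ201), hIZ1, hIZ2, hIW, hX1, hX2, hVar1,
    hVar2, selectorVariance, selectorVariance]
  have hE : Real.exp ε + 1 ≠ 0 := by positivity
  constructor <;> field_simp <;> ring

/-- Variances of the privatized first-moment coordinates of a single sample in the private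
two-means test: `W` indicates group 1, `X_1, X_2` are the group outcomes with means
`μ_1, μ_2` and variances `σ_1², σ_2²`, and `Z_1, Z_2` implement binary randomized response
on the group label. -/
theorem stmt15 (ε pgrp μ1 μ2 σ1 σ2 : ℝ) (hε : 0 < ε) (hpgrp : pgrp ∈ Set.Icc (0:ℝ) 1)
    (hσ1 : 0 ≤ σ1) (hσ2 : 0 ≤ σ2)
    (Ω : Type*) [MeasurableSpace Ω] (P : Measure Ω) [IsProbabilityMeasure P]
    (W Z1 Z2 X1 X2 : Ω → ℝ)
    (hW01 : ∀ ω, W ω = 0 ∨ W ω = 1)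
    (hZ101 : ∀ ω, Z1 ω = 0 ∨ Z1 ω = 1)
    (hZ201 : ∀ ω, Z2 ω = 0 ∨ Z2 ω = 1)
    (hWm : Measurable W) (hZ1m : Measurable Z1) (hZ2m : Measurable Z2)
    (hX1m : Measurable X1) (hX2m : Measurable X2)
    (hW : P {ω | W ω = 1} = ENNReal.ofReal pgrp)
    (hZ1 : P {ω | Z1 ω = 1} = ENNReal.ofReal (Real.exp ε / (Real.exp ε + 1)))
    (hZ2 : P {ω | Z2 ω = 1} = ENNReal.ofReal (Real.exp ε / (Real.exp ε + 1)))
    (hX1sq : MemLp X1 2 P) (hX2sq : MemLp X2 2 P)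
    (hX1 : ∫ ω, X1 ω ∂P = μ1) (hX2 : ∫ ω, X2 ω ∂P = μ2)
    (hVar1 : variance X1 P = σ1 ^ 2) (hVar2 : variance X2 P = σ2 ^ 2)
    (hindep : iIndepFun ![W, Z1, Z2, X1, X2] P) :
    (variance (fun ω => Z1 ω * W ω * X1 ω + (1 - Z2 ω) * (1 - W ω) * X2 ω) P
      = μ1 ^ 2 * (1 - pgrp * Real.exp ε / (Real.exp ε + 1))
            * (pgrp * Real.exp ε / (Real.exp ε + 1))
        + μ2 ^ 2 * (1 - (1 - pgrp) / (Real.exp ε + 1)) * ((1 - pgrp) / (Real.exp ε + 1))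
        - 2 * (pgrp * (1 - pgrp) * Real.exp ε / (Real.exp ε + 1) ^ 2) * μ1 * μ2
        + (pgrp * Real.exp ε / (Real.exp ε + 1)) * σ1 ^ 2
        + ((1 - pgrp) / (Real.exp ε + 1)) * σ2 ^ 2) ∧
    (variance (fun ω => (1 - Z1 ω) * W ω * X1 ω + Z2 ω * (1 - W ω) * X2 ω) P
      = μ1 ^ 2 * (1 - pgrp / (Real.exp ε + 1)) * (pgrp / (Real.exp ε + 1))
        + μ2 ^ 2 * (1 - (1 - pgrp) * Real.exp ε / (Real.exp ε + 1))
            * ((1 - pgrp) * Real.exp ε / (Real.exp ε + 1))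
        - 2 * (pgrp * (1 - pgrp) * Real.exp ε / (Real.exp ε + 1) ^ 2) * μ1 * μ2
        + (pgrp / (Real.exp ε + 1)) * σ1 ^ 2
        + ((1 - pgrp) * Real.exp ε / (Real.exp ε + 1)) * σ2 ^ 2) :=
  stmt15_general ε pgrp μ1 μ2 σ1 σ2 hpgrp Ω P W Z1 Z2 X1 X2 hW01 hZ101 hZ201 hWm hZ1m hZ2m hW hZ1
    hZ2 hX1sq hX2sq hX1 hX2 hVar1 hVar2 hindep
end
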